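/- arXiv:0808.2162 — 2 statements merged into one kernel-verified Lean document; each statement's English description precedes it below -/
import Mathlib

section
/- Let G be a symmetric numerical semigroup with minimal generators n₁ < ⋯ < n_d, Frobenius number f, and let z ∈ G with z > f. Write z = a·n₁ + w where w ∈ Ap(G, n₁) (so a = max{k : z − k·n₁ ∈ G}). Let w' = f + n₁ − w, which lies in Ap(G, n₁) by symmetry. Then a ≥ ord_G(w'). -/
/-- The numerical semigroup generated by `n 0, …, n (d-1)`. -/
def semigroupGen (d : ℕ) (n : Fin d → ℕ) : Set ℕ :=
  {z | ∃ a : Fin d → ℕ, ∑ i, a i * n i = z}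

/-- The set of lengths `∑ aᵢ` of representations `z = ∑ aᵢ nᵢ`. -/
def repLengths (d : ℕ) (n : Fin d → ℕ) (z : ℕ) : Set ℕ :=
  {s | ∃ a : Fin d → ℕ, (∑ i, a i * n i = z) ∧ (∑ i, a i = s)}

/-- Membership of an integer in the numerical semigroup. -/
def memZ (d : ℕ) (n : Fin d → ℕ) (z : ℤ) : Prop :=
  ∃ x ∈ semigroupGen d n, (x : ℤ) = z

/-- `G` is symmetric with respect to the Frobenius number `f`. -/
def IsSymmetricWith (d : ℕ) (n : Fin d → ℕ) (f : ℕ) : Prop :=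
  ∀ z : ℤ, memZ d n z ↔ ¬ memZ d n ((f : ℤ) - z)

/-- The given generators are a minimal generating system. -/
def MinimallyGenerated (d : ℕ) (n : Fin d → ℕ) : Prop :=
  ∀ i : Fin d, ¬ ∃ a : Fin d → ℕ, a i = 0 ∧ ∑ j, a j * n j = n i

/-- The Apéry set of the semigroup with respect to `e`. -/
def aperySet (d : ℕ) (n : Fin d → ℕ) (e : ℕ) : Set ℕ :=
  {x | x ∈ semigroupGen d n ∧ ¬ ∃ y ∈ semigroupGen d n, y + e = x}

/-! Every generator is at least `n₁`, so a representation of `w'` of length `s` gives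
`s · n₁ ≤ w' = f + n₁ - w < z + n₁ - w = (a + 1) · n₁`. -/

theorem mul_le_of_mem_repLengths {d : ℕ} {n : Fin d → ℕ} {m x s : ℕ} (hm : ∀ i, m ≤ n i)
    (hs : s ∈ repLengths d n x) : s * m ≤ x := by
  obtain ⟨b, rfl, rfl⟩ := hs
  rw [Finset.sum_mul]
  exact Finset.sum_le_sum fun i _ => Nat.mul_le_mul_left _ (hm i)

theorem stmt_1_general (d : ℕ) (hd : 0 < d) (n : Fin d → ℕ)
    (hmono : StrictMono n)
    (f : ℕ)
    (z : ℕ) (hzf : f < z)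
    (a : ℕ)
    (w : ℕ) (hw : a * n ⟨0, hd⟩ + w = z)
    (w' : ℕ) (hw' : w + w' = f + n ⟨0, hd⟩) :
    ∀ s : ℕ, IsGreatest (repLengths d n w') s → s ≤ a := by
  intro s hs
  have hs_le : s * n ⟨0, hd⟩ ≤ w' :=
    mul_le_of_mem_repLengths (fun i => hmono.monotone (Nat.zero_le i)) hs.1
  have hw'_lt : w' < (a + 1) * n ⟨0, hd⟩ := by rw [add_one_mul]; omega
  exact Nat.lt_succ_iff.mp (Nat.lt_of_mul_lt_mul_right (hs_le.trans_lt hw'_lt))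

theorem stmt_1 (d : ℕ) (hd : 0 < d) (n : Fin d → ℕ)
    (hpos : ∀ i, 0 < n i) (hmono : StrictMono n)
    (hmin : MinimallyGenerated d n)
    (f : ℕ) (hfnot : f ∉ semigroupGen d n)
    (hfro : ∀ m : ℕ, f < m → m ∈ semigroupGen d n)
    (hsym : IsSymmetricWith d n f)
    (z : ℕ) (hz : z ∈ semigroupGen d n) (hzf : f < z)
    (a : ℕ)
    (ha : IsGreatest {k : ℕ | ∃ y ∈ semigroupGen d n, k * n ⟨0, hd⟩ + y = z} a)
    (w : ℕ) (hw : a * n ⟨0, hd⟩ + w = z)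
    (hwAp : w ∈ aperySet d n (n ⟨0, hd⟩))
    (w' : ℕ) (hw' : w + w' = f + n ⟨0, hd⟩)
    (hw'Ap : w' ∈ aperySet d n (n ⟨0, hd⟩)) :
    ∀ s : ℕ, IsGreatest (repLengths d n w') s → s ≤ a :=
  stmt_1_general d hd n hmono f z hzf a w hw w' hw'
end

section
/- Let k be a field. In k[x, y, z], with natural numbers satisfying 0 < b' < b, 0 < c' < c, 0 < α < a, 0 ≤ β < b − b', 0 ≤ γ < c − c', the intersection (x^a − y^{b'}z^{c'}, y^b, z^c) ∩ (x^α y^β z^γ) equals the ideal generated by x^α y^β z^γ · y^{b−β}, x^α y^β z^γ · z^{c−γ}, x^α y^β z^γ · x^{a−α} y^{b−b'−β}, x^α y^β z^γ · x^{a−α} z^{c−c'−γ}, and x^α y^β z^γ · (x^a − y^{b'}z^{c'}). -/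
open MvPolynomial

/-!
Write `I` for the first ideal, `m = x^α y^β z^γ`, and `J` for the ideal generated by the cofactors
of `m` on the right-hand side. Since `I ∩ (m) = m (I : m)`, the claim is `(I : m) = J`, and
`m J ⊆ I` is a check on generators.

For `(I : m) ⊆ J`: rewriting `x^a ↦ y^{b'} z^{c'}` and discarding monomial multiples of the
generators of `J` reduces every `g` modulo `J` to a combination `q` of the standard monomials of `J`.
The linear normal form map onto the span of the monomials `x^i y^j z^l` with `i < a`, `j < b`,
`l < c` vanishes on `I`. On `m` times a standard monomial of `J` it takes a single rewriting step
and is injective, so `g m ∈ I` forces `q = 0`, i.e. `g ∈ J`.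
-/

noncomputable section

namespace BinomialColon

section General

variable {R : Type*} [CommSemiring R]

theorem monomial_eq_C_mul_X_pow_fin3 (d : Fin 3 →₀ ℕ) (r : R) :
    monomial d r = C r * X 0 ^ d 0 * X 1 ^ d 1 * X 2 ^ d 2 := by
  rw [monomial_eq, Finsupp.prod_fintype _ _ fun _ => pow_zero _, Fin.prod_univ_three]
  ring

theorem map_eq_zero_of_mem_span {σ M : Type*} [AddCommMonoid M] [Module R M]
    (L : MvPolynomial σ R →ₗ[R] M) {S : Set (MvPolynomial σ R)}
    (hS : ∀ d r, ∀ s ∈ S, L (monomial d r * s) = 0) {p : MvPolynomial σ R}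
    (hp : p ∈ Ideal.span S) : L p = 0 := by
  suffices ∀ u, L (u * p) = 0 by simpa using this 1
  induction hp using Submodule.span_induction with
  | mem s hs =>
    intro u
    induction u using induction_on' with
    | monomial d r => exact hS d r s hs
    | add u v hu hv => rw [add_mul, map_add, hu, hv, add_zero]
  | zero => simp
  | add x y _ _ hx hy => intro u; rw [mul_add, map_add, hx, hy, add_zero]
  | smul r x _ hx => intro u; rw [smul_eq_mul, ← mul_assoc]; exact hx _

theorem eq_zero_of_map_eq_zero_of_injOn {σ τ : Type*}
    (L : MvPolynomial σ R →ₗ[R] MvPolynomial τ R) {S : Set (σ →₀ ℕ)}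
    {φ : (σ →₀ ℕ) → τ →₀ ℕ} (hφ : S.InjOn φ)
    (hL : ∀ d ∈ S, ∀ r, L (monomial d r) = monomial (φ d) r) {p : MvPolynomial σ R}
    (hp : ↑p.support ⊆ S) (h : L p = 0) : p = 0 := by
  classical
  ext e
  by_contra he
  have he' : e ∈ p.support := mem_support_iff.2 he
  have : coeff (φ e) (L p) = coeff e p := by
    conv_lhs => rw [p.as_sum]
    rw [map_sum, coeff_sum, Finset.sum_eq_single e]
    · rw [hL e (hp he'), coeff_monomial, if_pos rfl]
    · intro d hd hde
      rw [hL d (hp hd), coeff_monomial, if_neg fun h => hde (hφ (hp hd) (hp he') h)]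
    · exact fun h => absurd he' h
  rw [h, coeff_zero] at this
  exact he this.symm

theorem _root_.Ideal.inf_span_singleton_eq_span_image {I : Ideal R} {m : R} {G : Set R}
    (h : I.colon {m} = Ideal.span G) : I ⊓ Ideal.span {m} = Ideal.span ((m * ·) '' G) := by
  change _ = Submodule.span R (LinearMap.mulLeft R m '' G)
  rw [Submodule.span_image, show Submodule.span R G = I.colon {m} from h.symm]
  ext p
  simp only [Submodule.mem_inf, Ideal.mem_span_singleton', Submodule.mem_map,
    Submodule.mem_colon_singleton, smul_eq_mul, LinearMap.mulLeft_apply]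
  constructor
  · rintro ⟨hp, g, rfl⟩
    exact ⟨g, hp, mul_comm _ _⟩
  · rintro ⟨g, hg, rfl⟩
    exact ⟨by rwa [mul_comm], g, mul_comm _ _⟩

end General

def expVec (i j l : ℕ) : Fin 3 →₀ ℕ := Finsupp.equivFunOnFinite.symm ![i, j, l]

@[simp] theorem expVec_apply_zero (i j l : ℕ) : expVec i j l 0 = i := rfl
@[simp] theorem expVec_apply_one (i j l : ℕ) : expVec i j l 1 = j := rfl
@[simp] theorem expVec_apply_two (i j l : ℕ) : expVec i j l 2 = l := rfl

theorem X_pow_mul_X_pow_mul_X_pow_eq_monomial {R : Type*} [CommSemiring R] (i j l : ℕ) :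
    (X 0 ^ i * X 1 ^ j * X 2 ^ l : MvPolynomial (Fin 3) R) = monomial (expVec i j l) 1 := by
  rw [monomial_eq_C_mul_X_pow_fin3, C_1, one_mul, expVec_apply_zero, expVec_apply_one,
    expVec_apply_two]

section NormalForm

variable {k : Type*} [CommRing k] (a b c b' c' : ℕ)

variable (k) in
def binomialIdeal : Ideal (MvPolynomial (Fin 3) k) :=
  Ideal.span {X 0 ^ a - X 1 ^ b' * X 2 ^ c', X 1 ^ b, X 2 ^ c}

/-- The exponent of what `x^{d₀} y^{d₁} z^{d₂}` becomes when `x^a` is rewritten to `y^{b'} z^{c'}`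
as often as possible. -/
def reduceExp (d : Fin 3 →₀ ℕ) : Fin 3 →₀ ℕ :=
  expVec (d 0 % a) (d 1 + d 0 / a * b') (d 2 + d 0 / a * c')

/-- Reduction modulo `binomialIdeal`, with values in the span of the monomials `x^i y^j z^l` with
`i < a`, `j < b`, `l < c`. -/
def normalForm : MvPolynomial (Fin 3) k →ₗ[k] MvPolynomial (Fin 3) k :=
  (basisMonomials (Fin 3) k).constr k fun d =>
    if reduceExp a b' c' d 1 < b ∧ reduceExp a b' c' d 2 < c then
      monomial (reduceExp a b' c' d) 1
    else 0

variable {a b c b' c'}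

theorem binomial_mem_binomialIdeal : X 0 ^ a - X 1 ^ b' * X 2 ^ c' ∈ binomialIdeal k a b c b' c' :=
  Ideal.subset_span (by simp)

theorem X_one_pow_mem_binomialIdeal : X 1 ^ b ∈ binomialIdeal k a b c b' c' :=
  Ideal.subset_span (by simp)

theorem X_two_pow_mem_binomialIdeal : X 2 ^ c ∈ binomialIdeal k a b c b' c' :=
  Ideal.subset_span (by simp)

theorem monomial_mem_binomialIdeal {d : Fin 3 →₀ ℕ}
    (h : b ≤ d 1 ∨ c ≤ d 2 ∨ a ≤ d 0 ∧ (b ≤ d 1 + b' ∨ c ≤ d 2 + c')) (r : k) :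
    monomial d r ∈ binomialIdeal k a b c b' c' := by
  have base : ∀ i j l, b ≤ j ∨ c ≤ l →
      C r * X 0 ^ i * X 1 ^ j * X 2 ^ l ∈ binomialIdeal k a b c b' c' := by
    rintro i j l (h | h)
    · exact Ideal.mem_of_dvd _ (((pow_dvd_pow _ h).mul_left _).mul_right _)
        X_one_pow_mem_binomialIdeal
    · exact Ideal.mem_of_dvd _ ((pow_dvd_pow _ h).mul_left _) X_two_pow_mem_binomialIdeal
  rw [monomial_eq_C_mul_X_pow_fin3]
  rcases h with h | h | ⟨h0, h⟩
  · exact base _ _ _ (.inl h)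
  · exact base _ _ _ (.inr h)
  obtain ⟨i, hi⟩ := Nat.exists_eq_add_of_le h0
  rw [hi, show (C r * X 0 ^ (a + i) * X 1 ^ d 1 * X 2 ^ d 2 : MvPolynomial (Fin 3) k) =
      C r * X 0 ^ i * X 1 ^ d 1 * X 2 ^ d 2 * (X 0 ^ a - X 1 ^ b' * X 2 ^ c') +
        C r * X 0 ^ i * X 1 ^ (d 1 + b') * X 2 ^ (d 2 + c') by ring]
  exact add_mem (Ideal.mul_mem_left _ _ binomial_mem_binomialIdeal) (base _ _ _ (by omega))

theorem normalForm_monomial (d : Fin 3 →₀ ℕ) (r : k) :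
    normalForm a b c b' c' (monomial d r) =
      if reduceExp a b' c' d 1 < b ∧ reduceExp a b' c' d 2 < c then
        monomial (reduceExp a b' c' d) r
      else 0 := by
  have : monomial d r = r • basisMonomials (Fin 3) k d := by
    rw [coe_basisMonomials, smul_monomial, smul_eq_mul, mul_one]
  rw [normalForm, this, map_smul, Module.Basis.constr_basis]
  split_ifs <;> simp [smul_monomial]

theorem normalForm_monomial_congr {d e : Fin 3 →₀ ℕ}
    (h : reduceExp a b' c' d = reduceExp a b' c' e) (r : k) :
    normalForm a b c b' c' (monomial d r) = normalForm a b c b' c' (monomial e r) := by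
  simp only [normalForm_monomial, h]

theorem monomial_sub_monomial_reduceExp_mem (d : Fin 3 →₀ ℕ) (r : k) :
    monomial d r - monomial (reduceExp a b' c' d) r ∈
      Ideal.span {X 0 ^ a - X 1 ^ b' * X 2 ^ c'} := by
  have hx : (X 0 ^ d 0 : MvPolynomial (Fin 3) k) = (X 0 ^ a) ^ (d 0 / a) * X 0 ^ (d 0 % a) := by
    rw [← pow_mul, ← pow_add, Nat.div_add_mod]
  rw [Ideal.mem_span_singleton, monomial_eq_C_mul_X_pow_fin3, monomial_eq_C_mul_X_pow_fin3, hx]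
  simp only [reduceExp, expVec_apply_zero, expVec_apply_one, expVec_apply_two]
  generalize d 0 / a = q, d 0 % a = s
  exact ((sub_dvd_pow_sub_pow _ _ q).mul_left (C r * X 0 ^ s * X 1 ^ d 1 * X 2 ^ d 2)).trans
    (dvd_of_eq (by ring))

theorem normalForm_eq_zero_of_mem (ha : 0 < a) {p : MvPolynomial (Fin 3) k}
    (hp : p ∈ binomialIdeal k a b c b' c') : normalForm a b c b' c' p = 0 := by
  refine map_eq_zero_of_mem_span _ (fun d r s hs => ?_) hp
  simp only [Set.mem_insert_iff, Set.mem_singleton_iff] at hs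
  rcases hs with rfl | rfl | rfl
  · rw [mul_sub, map_sub, sub_eq_zero]
    simp only [X_pow_eq_monomial, monomial_mul, mul_one]
    apply normalForm_monomial_congr
    ext i
    fin_cases i <;> simp [reduceExp, Nat.add_div_right _ ha] <;> ring
  all_goals
    rw [X_pow_eq_monomial, monomial_mul, normalForm_monomial, if_neg]
    simp [reduceExp]
    omega

end NormalForm

section Colon

variable {k : Type*} [CommRing k] (a b c b' c' α β γ : ℕ)

/-- The exponents with `x`-degree below `a` of the monomials divisible by none of the monomial
generators in `colonGens`. -/
def standardExps : Set (Fin 3 →₀ ℕ) :=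
  {d | d 0 < a - α ∧ d 1 < b - β ∧ d 2 < c - γ ∨
    a - α ≤ d 0 ∧ d 0 < a ∧ d 1 < b - b' - β ∧ d 2 < c - c' - γ}

def colonGens : Set (MvPolynomial (Fin 3) k) :=
  {X 1 ^ (b - β), X 2 ^ (c - γ), X 0 ^ (a - α) * X 1 ^ (b - b' - β),
    X 0 ^ (a - α) * X 2 ^ (c - c' - γ), X 0 ^ a - X 1 ^ b' * X 2 ^ c'}

variable {a b c b' c' α β γ}

theorem monomial_mem_span_colonGens {d : Fin 3 →₀ ℕ} (hd : d 0 < a)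
    (hS : d ∉ standardExps a b c b' c' α β γ) (r : k) :
    monomial d r ∈ Ideal.span (colonGens a b c b' c' α β γ) := by
  simp only [standardExps, Set.mem_ofPred_eq] at hS
  rw [monomial_eq_C_mul_X_pow_fin3]
  obtain h | h | ⟨h0, h⟩ | ⟨h0, h⟩ : b - β ≤ d 1 ∨ c - γ ≤ d 2 ∨
      a - α ≤ d 0 ∧ b - b' - β ≤ d 1 ∨ a - α ≤ d 0 ∧ c - c' - γ ≤ d 2 := by omega
  · exact Ideal.mem_of_dvd _ (((pow_dvd_pow _ h).mul_left _).mul_right _)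
      (Ideal.subset_span (by simp [colonGens]))
  · exact Ideal.mem_of_dvd _ ((pow_dvd_pow _ h).mul_left _)
      (Ideal.subset_span (by simp [colonGens]))
  · exact Ideal.mem_of_dvd _
      ((mul_dvd_mul ((pow_dvd_pow _ h0).mul_left _) (pow_dvd_pow _ h)).mul_right _)
      (Ideal.subset_span (by simp [colonGens]))
  · exact Ideal.mem_of_dvd _
      (mul_dvd_mul (((pow_dvd_pow _ h0).mul_left _).mul_right _) (pow_dvd_pow _ h))
      (Ideal.subset_span (by simp [colonGens]))

theorem exists_sub_mem_span_colonGens_support_subset (ha : 0 < a) (p : MvPolynomial (Fin 3) k) :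
    ∃ q, p - q ∈ Ideal.span (colonGens a b c b' c' α β γ) ∧
      ↑q.support ⊆ standardExps a b c b' c' α β γ := by
  classical
  induction p using induction_on' with
  | monomial d r =>
    have hf : monomial d r - monomial (reduceExp a b' c' d) r ∈
        Ideal.span (colonGens a b c b' c' α β γ) :=
      Ideal.span_mono (by simp [colonGens]) (monomial_sub_monomial_reduceExp_mem d r)
    by_cases hS : reduceExp a b' c' d ∈ standardExps a b c b' c' α β γ
    · refine ⟨_, hf, fun e he => ?_⟩
      rwa [Finset.mem_singleton.1 (support_monomial_subset he)]
    · refine ⟨0, ?_, by simp⟩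
      rw [sub_zero, ← sub_add_cancel (monomial d r) (monomial (reduceExp a b' c' d) r)]
      exact add_mem hf (monomial_mem_span_colonGens (Nat.mod_lt _ ha) hS r)
  | add p q hp hq =>
    obtain ⟨p', hp, hp'⟩ := hp
    obtain ⟨q', hq, hq'⟩ := hq
    refine ⟨p' + q', by convert add_mem hp hq using 1; ring, fun e he => ?_⟩
    rcases Finset.mem_union.1 (support_add he) with h | h
    exacts [hp' h, hq' h]

theorem span_colonGens_le_colon :
    Ideal.span (colonGens a b c b' c' α β γ) ≤
      (binomialIdeal k a b c b' c').colon {X 0 ^ α * X 1 ^ β * X 2 ^ γ} := by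
  refine Ideal.span_le.2 fun g hg => Submodule.mem_colon_singleton.2 ?_
  simp only [colonGens, Set.mem_insert_iff, Set.mem_singleton_iff] at hg
  rw [smul_eq_mul]
  rcases hg with rfl | rfl | rfl | rfl | rfl <;>
  first
  | exact Ideal.mul_mem_right _ _ binomial_mem_binomialIdeal
  | simp only [X_pow_eq_monomial, monomial_mul, mul_one]
    exact monomial_mem_binomialIdeal (by simp; omega) 1

theorem reduceExp_add_expVec_of_mem (hαa : α < a) {d : Fin 3 →₀ ℕ}
    (hd : d ∈ standardExps a b c b' c' α β γ) :
    reduceExp a b' c' (d + expVec α β γ) =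
      if d 0 < a - α then expVec (d 0 + α) (d 1 + β) (d 2 + γ)
      else expVec (d 0 + α - a) (d 1 + β + b') (d 2 + γ + c') := by
  have hd0 : d 0 < a := by simp only [standardExps, Set.mem_ofPred_eq] at hd; omega
  simp only [reduceExp, Finsupp.add_apply, expVec_apply_zero, expVec_apply_one, expVec_apply_two]
  split_ifs with h
  · rw [Nat.div_eq_of_lt (by omega), Nat.mod_eq_of_lt (by omega)]
    simp
  · rw [Nat.div_eq_of_lt_le (k := 1) (by omega) (by omega), Nat.mod_eq_sub_mod (by omega),
      Nat.mod_eq_of_lt (by omega)]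
    simp

theorem normalForm_monomial_add_expVec (hαa : α < a) {d : Fin 3 →₀ ℕ}
    (hd : d ∈ standardExps a b c b' c' α β γ) (r : k) :
    normalForm a b c b' c' (monomial (d + expVec α β γ) r) =
      monomial (reduceExp a b' c' (d + expVec α β γ)) r := by
  rw [normalForm_monomial, if_pos]
  rw [reduceExp_add_expVec_of_mem hαa hd]
  simp only [standardExps, Set.mem_ofPred_eq] at hd
  split_ifs <;> simp <;> omega

theorem injOn_reduceExp_add_expVec (hαa : α < a) :
    (standardExps a b c b' c' α β γ).InjOn fun d => reduceExp a b' c' (d + expVec α β γ) := by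
  intro d hd e he h
  simp only [reduceExp_add_expVec_of_mem hαa hd, reduceExp_add_expVec_of_mem hαa he] at h
  simp only [standardExps, Set.mem_ofPred_eq] at hd he
  have h0 := DFunLike.congr_fun h 0
  have h1 := DFunLike.congr_fun h 1
  have h2 := DFunLike.congr_fun h 2
  have : d 0 = e 0 ∧ d 1 = e 1 ∧ d 2 = e 2 := by
    split_ifs at h0 h1 h2 <;>
      simp only [expVec_apply_zero, expVec_apply_one, expVec_apply_two] at h0 h1 h2 <;> omega
  ext i
  fin_cases i <;> simp [this]

theorem colon_eq_span_colonGens (hαa : α < a) :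
    (binomialIdeal k a b c b' c').colon {X 0 ^ α * X 1 ^ β * X 2 ^ γ} =
      Ideal.span (colonGens a b c b' c' α β γ) := by
  refine le_antisymm (fun g hg => ?_) span_colonGens_le_colon
  obtain ⟨q, hgq, hq⟩ := exists_sub_mem_span_colonGens_support_subset (by omega : 0 < a) g
  have hqI : q ∈ (binomialIdeal k a b c b' c').colon {X 0 ^ α * X 1 ^ β * X 2 ^ γ} := by
    simpa using sub_mem hg (span_colonGens_le_colon hgq)
  rw [Submodule.mem_colon_singleton, smul_eq_mul] at hqI
  have hq0 : q = 0 := by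
    refine eq_zero_of_map_eq_zero_of_injOn
      (normalForm a b c b' c' ∘ₗ LinearMap.mulRight k (X 0 ^ α * X 1 ^ β * X 2 ^ γ))
      (injOn_reduceExp_add_expVec hαa) (fun d hd r => ?_) hq ?_
    · rw [LinearMap.comp_apply, LinearMap.mulRight_apply, X_pow_mul_X_pow_mul_X_pow_eq_monomial,
        monomial_mul, mul_one, normalForm_monomial_add_expVec hαa hd]
    · rw [LinearMap.comp_apply, LinearMap.mulRight_apply]
      exact normalForm_eq_zero_of_mem (by omega) hqI
  simpa [hq0] using hgq

end Colon

end BinomialColon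

end

theorem stmt_12_general (k : Type*) [Field k] (a b c b' c' α β γ : ℕ)
    (hαa : α < a) :
    (Ideal.span {X 0 ^ a - X 1 ^ b' * X 2 ^ c', X 1 ^ b, X 2 ^ c} :
        Ideal (MvPolynomial (Fin 3) k)) ⊓
      Ideal.span {X 0 ^ α * X 1 ^ β * X 2 ^ γ} =
    Ideal.span {X 0 ^ α * X 1 ^ β * X 2 ^ γ * X 1 ^ (b - β),
      X 0 ^ α * X 1 ^ β * X 2 ^ γ * X 2 ^ (c - γ),
      X 0 ^ α * X 1 ^ β * X 2 ^ γ * (X 0 ^ (a - α) * X 1 ^ (b - b' - β)),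
      X 0 ^ α * X 1 ^ β * X 2 ^ γ * (X 0 ^ (a - α) * X 2 ^ (c - c' - γ)),
      X 0 ^ α * X 1 ^ β * X 2 ^ γ * (X 0 ^ a - X 1 ^ b' * X 2 ^ c')} := by
  refine (Ideal.inf_span_singleton_eq_span_image
    (BinomialColon.colon_eq_span_colonGens hαa)).trans ?_
  simp only [BinomialColon.colonGens, Set.image_insert_eq, Set.image_singleton]

theorem stmt_12 (k : Type*) [Field k] (a b c b' c' α β γ : ℕ)
    (hb'0 : 0 < b') (hb'b : b' < b) (hc'0 : 0 < c') (hc'c : c' < c)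
    (hα0 : 0 < α) (hαa : α < a) (hβ : β < b - b') (hγ : γ < c - c') :
    (Ideal.span {X 0 ^ a - X 1 ^ b' * X 2 ^ c', X 1 ^ b, X 2 ^ c} :
        Ideal (MvPolynomial (Fin 3) k)) ⊓
      Ideal.span {X 0 ^ α * X 1 ^ β * X 2 ^ γ} =
    Ideal.span {X 0 ^ α * X 1 ^ β * X 2 ^ γ * X 1 ^ (b - β),
      X 0 ^ α * X 1 ^ β * X 2 ^ γ * X 2 ^ (c - γ),
      X 0 ^ α * X 1 ^ β * X 2 ^ γ * (X 0 ^ (a - α) * X 1 ^ (b - b' - β)),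
      X 0 ^ α * X 1 ^ β * X 2 ^ γ * (X 0 ^ (a - α) * X 2 ^ (c - c' - γ)),
      X 0 ^ α * X 1 ^ β * X 2 ^ γ * (X 0 ^ a - X 1 ^ b' * X 2 ^ c')} :=
  stmt_12_general k a b c b' c' α β γ hαa
end
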